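/- arXiv:2108.01969 — 2 statements merged into one kernel-verified Lean document; each statement's English description precedes it below -/
import Mathlib

section
/- Let m > 0 be a real number and define G_m(r) = 2m ∫_r^1 (∫_t^1 (sinh s / sinh t)^m ds) dt for r ∈ (0,1]. Then for every r ∈ (0,1) and every real number a with a ≤ m·coth(r), one has G_m''(r) + a·G_m'(r) ≥ 2m. -/
/-!
Write `F(t) = ∫_t^1 (sinh s / sinh t)^m ds = sinh(t)^(-m) ∫_t^1 sinh(s)^m ds`, so that `G_m' = -2m F`.
Differentiating the factorisation gives `F' = -m coth(t) F - 1`, hence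
`G_m'' + a G_m' = 2m + 2m (m coth r - a) F(r)`, and the last term is nonnegative because
`F ≥ 0` on `(0, 1]`.
-/

open Real Set Filter Topology

theorem hasDerivAt_integral_left_of_continuousOn {f : ℝ → ℝ} {U : Set ℝ} {x b : ℝ}
    (hU : IsOpen U) (hf : ContinuousOn f U) (hxb : uIcc x b ⊆ U) :
    HasDerivAt (fun u => ∫ s in u..b, f s) (-f x) x := by
  have hx : x ∈ U := hxb left_mem_uIcc
  exact intervalIntegral.integral_hasDerivAt_left ((hf.mono hxb).intervalIntegrable)
    (hf.stronglyMeasurableAtFilter hU x hx) (hf.continuousAt (hU.mem_nhds hx))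

theorem uIcc_one_subset_Ioi_zero {t : ℝ} (ht : 0 < t) : uIcc t 1 ⊆ Ioi 0 :=
  ordConnected_Ioi.uIcc_subset ht (mem_Ioi.2 one_pos)

theorem continuousOn_sinh_rpow (m : ℝ) : ContinuousOn (fun s => sinh s ^ m) (Ioi 0) :=
  continuous_sinh.continuousOn.rpow_const fun _ hs => Or.inl (sinh_pos_iff.2 hs).ne'

noncomputable def sinhRatioIntegral (m t : ℝ) : ℝ := ∫ s in t..1, (sinh s / sinh t) ^ m

noncomputable def comparisonFunction (m r : ℝ) : ℝ := 2 * m * ∫ t in r..1, sinhRatioIntegral m t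

theorem sinhRatioIntegral_eq {m t : ℝ} (ht : 0 < t) :
    sinhRatioIntegral m t = sinh t ^ (-m) * ∫ s in t..1, sinh s ^ m := by
  have hsinh : 0 < sinh t := sinh_pos_iff.2 ht
  rw [sinhRatioIntegral, ← intervalIntegral.integral_const_mul]
  refine intervalIntegral.integral_congr fun s hs => ?_
  have hs' : 0 < sinh s := sinh_pos_iff.2 (uIcc_one_subset_Ioi_zero ht hs)
  simp only [div_rpow hs'.le hsinh.le, rpow_neg hsinh.le]
  ring

theorem sinhRatioIntegral_nonneg {m t : ℝ} (ht : 0 < t) (ht1 : t ≤ 1) :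
    0 ≤ sinhRatioIntegral m t :=
  intervalIntegral.integral_nonneg ht1 fun _ hs =>
    rpow_nonneg (div_nonneg (sinh_nonneg_iff.2 (ht.le.trans hs.1)) (sinh_pos_iff.2 ht).le) _

theorem hasDerivAt_sinhRatioIntegral {m t : ℝ} (ht : 0 < t) :
    HasDerivAt (sinhRatioIntegral m)
      (-(m * (cosh t / sinh t)) * sinhRatioIntegral m t - 1) t := by
  have hsinh : 0 < sinh t := sinh_pos_iff.2 ht
  have hpow : HasDerivAt (fun u => sinh u ^ (-m)) (-m * sinh t ^ (-m - 1) * cosh t) t :=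
    (hasDerivAt_rpow_const (Or.inl hsinh.ne')).comp t (hasDerivAt_sinh t)
  have hint : HasDerivAt (fun u => ∫ s in u..1, sinh s ^ m) (-(sinh t ^ m)) t :=
    hasDerivAt_integral_left_of_continuousOn isOpen_Ioi (continuousOn_sinh_rpow m)
      (uIcc_one_subset_Ioi_zero ht)
  have hfactor : sinhRatioIntegral m =ᶠ[𝓝 t] fun u => sinh u ^ (-m) * ∫ s in u..1, sinh s ^ m :=
    eventually_of_mem (Ioi_mem_nhds ht) fun u hu => sinhRatioIntegral_eq hu
  refine ((hpow.mul hint).congr_of_eventuallyEq hfactor).congr_deriv ?_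
  have hinv : sinh t ^ (-m) * sinh t ^ m = 1 := by
    rw [← rpow_add hsinh, neg_add_cancel, rpow_zero]
  rw [sinhRatioIntegral_eq ht, rpow_sub hsinh, rpow_one]
  field_simp
  linear_combination (-sinh t) * hinv

theorem continuousOn_sinhRatioIntegral (m : ℝ) : ContinuousOn (sinhRatioIntegral m) (Ioi 0) :=
  fun _ ht => (hasDerivAt_sinhRatioIntegral ht).continuousAt.continuousWithinAt

theorem hasDerivAt_comparisonFunction {m r : ℝ} (hr : 0 < r) :
    HasDerivAt (comparisonFunction m) (-(2 * m) * sinhRatioIntegral m r) r := by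
  have h := (hasDerivAt_integral_left_of_continuousOn isOpen_Ioi
    (continuousOn_sinhRatioIntegral m) (uIcc_one_subset_Ioi_zero hr)).const_mul (2 * m)
  rwa [mul_neg, ← neg_mul] at h

theorem deriv_deriv_comparisonFunction {m r : ℝ} (hr : 0 < r) :
    deriv (deriv (comparisonFunction m)) r
      = -(2 * m) * (-(m * (cosh r / sinh r)) * sinhRatioIntegral m r - 1) := by
  have hderiv : deriv (comparisonFunction m) =ᶠ[𝓝 r] fun x => -(2 * m) * sinhRatioIntegral m x :=
    eventually_of_mem (Ioi_mem_nhds hr) fun x hx => (hasDerivAt_comparisonFunction hx).deriv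
  rw [hderiv.deriv_eq]
  exact ((hasDerivAt_sinhRatioIntegral hr).const_mul _).deriv

/-- For `m > 0` and the comparison function
`G_m(r) = 2m ∫_r^1 (∫_t^1 (sinh s / sinh t)^m ds) dt`, for every `r ∈ (0,1)` and every real
`a ≤ m coth r` one has `G_m''(r) + a G_m'(r) ≥ 2m`. -/
theorem gap_G_barrier_inequality (m : ℝ) (hm : 0 < m) (G : ℝ → ℝ)
    (hG : ∀ r : ℝ, G r =
      2 * m * ∫ t in r..(1 : ℝ), ∫ s in t..(1 : ℝ), (Real.sinh s / Real.sinh t) ^ m) :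
    ∀ r ∈ Set.Ioo (0 : ℝ) 1, ∀ a : ℝ, a ≤ m * (Real.cosh r / Real.sinh r) →
      2 * m ≤ deriv (deriv G) r + a * deriv G r := by
  rintro r ⟨hr0, hr1⟩ a ha
  obtain rfl : G = comparisonFunction m := funext hG
  have hF := sinhRatioIntegral_nonneg (m := m) hr0 hr1.le
  rw [deriv_deriv_comparisonFunction hr0, (hasDerivAt_comparisonFunction hr0).deriv]
  nlinarith [mul_nonneg (mul_nonneg hm.le (sub_nonneg.2 ha)) hF]
end

section
/- Let m > 0 be a real number, let G_m(r) = 2m ∫_r^1 (∫_t^1 (sinh s / sinh t)^m ds) dt for r ∈ (0,1], and let H_m(r) = 2r + G_m(r). Then H_m(1) = 2 and there exists a real number c ∈ (0,1) with H_m(c) < 2. -/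
/-- For `m > 0`, with `G_m(r) = 2m ∫_r^1 (∫_t^1 (sinh s / sinh t)^m ds) dt` and
`H_m(r) = 2r + G_m(r)`, one has `H_m(1) = 2` and there is `c ∈ (0,1)` with `H_m(c) < 2`. -/
theorem gap_H_exists_lt_two (m : ℝ) (hm : 0 < m) (G H : ℝ → ℝ)
    (hG : ∀ r : ℝ, G r =
      2 * m * ∫ t in r..(1 : ℝ), ∫ s in t..(1 : ℝ), (Real.sinh s / Real.sinh t) ^ m)
    (hH : ∀ r : ℝ, H r = 2 * r + G r) :
    H 1 = 2 ∧ ∃ c ∈ Set.Ioo (0 : ℝ) 1, H c < 2 := by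
  constructor
  · rw [hH, hG]
    simp
  · set K : ℝ := (Real.sinh 1 / Real.sinh (1/2)) ^ m with hK
    have hsinh_half : 0 < Real.sinh (1/2) := Real.sinh_pos_iff.2 (by norm_num)
    have hKpos : 0 < K := Real.rpow_pos_of_pos
      (div_pos (Real.sinh_pos_iff.2 one_pos) hsinh_half) m
    set δ : ℝ := min (1/2) (1/(2*(m*K+1))) with hδ
    have hmK1 : 0 < m * K + 1 := by positivity
    have hδpos : 0 < δ := lt_min (by norm_num) (by positivity)
    have hδhalf : δ ≤ 1/2 := min_le_left _ _
    set c : ℝ := 1 - δ with hc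
    have hc_half : (1/2 : ℝ) ≤ c := by
      simp only [hc]; linarith
    have hc1 : c < 1 := by simp only [hc]; linarith
    have hc0 : 0 < c := by linarith
    refine ⟨c, ⟨hc0, hc1⟩, ?_⟩
    -- bound the inner integral
    have hinner : ∀ t ∈ Set.uIoc c 1,
        ‖∫ s in t..(1:ℝ), (Real.sinh s / Real.sinh t) ^ m‖ ≤ K * δ := by
      intro t ht
      rw [Set.uIoc_of_le hc1.le] at ht
      have ht1 : t ≤ 1 := ht.2
      have htc : c < t := ht.1
      have hsinht : 0 < Real.sinh t := Real.sinh_pos_iff.2 (by linarith)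
      have hb : ‖∫ s in t..(1:ℝ), (Real.sinh s / Real.sinh t) ^ m‖ ≤ K * |1 - t| := by
        apply intervalIntegral.norm_integral_le_of_norm_le_const
        intro s hs
        rw [Set.uIoc_of_le ht1] at hs
        have hs1 : s ≤ 1 := hs.2
        have hst : t < s := hs.1
        have hbase : 0 ≤ Real.sinh s / Real.sinh t := by
          have : 0 < Real.sinh s := Real.sinh_pos_iff.2 (by linarith)
          positivity
        rw [Real.norm_eq_abs, abs_of_nonneg (Real.rpow_nonneg hbase m)]
        apply Real.rpow_le_rpow hbase _ hm.le
        exact div_le_div₀ (Real.sinh_nonneg_iff.2 (by norm_num)) (Real.sinh_le_sinh.2 hs1)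
          hsinh_half (Real.sinh_le_sinh.2 (by linarith))
      calc ‖∫ s in t..(1:ℝ), (Real.sinh s / Real.sinh t) ^ m‖ ≤ K * |1 - t| := hb
        _ ≤ K * δ := by
            apply mul_le_mul_of_nonneg_left _ hKpos.le
            rw [abs_of_nonneg (by linarith)]
            simp only [hc] at htc; linarith
    have houter : ‖∫ t in c..(1:ℝ), ∫ s in t..(1:ℝ), (Real.sinh s / Real.sinh t) ^ m‖
        ≤ (K * δ) * |1 - c| :=
      intervalIntegral.norm_integral_le_of_norm_le_const hinner
    have hGc : G c ≤ 2 * m * (K * δ * δ) := by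
      rw [hG]
      have h1 : |1 - c| = δ := by rw [hc]; rw [abs_of_nonneg (by linarith)]; ring
      rw [h1] at houter
      have := (le_abs_self _).trans houter
      nlinarith
    have hlt : 2 * m * (K * δ * δ) < 2 * δ := by
      have hδ2 : δ ≤ 1/(2*(m*K+1)) := min_le_right _ _
      have : m * K * δ ≤ m * K * (1/(2*(m*K+1))) := by
        apply mul_le_mul_of_nonneg_left hδ2 (by positivity)
      have h2 : m * K * (1/(2*(m*K+1))) < 1 := by
        rw [mul_one_div, div_lt_one (by positivity)]
        nlinarith
      nlinarith
    rw [hH]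
    have : 2 * c = 2 - 2 * δ := by rw [hc]; ring
    linarith
end
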